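/- The quadratic coefficient V^{(2)}_t of the value process V^H_t(x) = V^{(0)}_t − 2V^{(1)}_t x + V^{(2)}_t x^2 equals the value V^0_t(1) = essinf_{ϑ∈Θ} E[(1 + ∫_t^T ϑ_r dS_r)^2 | F_t] of the pure-investment problem and in particular does not depend on H. -/

import Mathlib

/-!
Scaling a strategy by the initial capital `x` and splitting off `H` with the inequality
`(a + b)² ≤ (1 + ε) a² + (1 + ε⁻¹) b²` at `ε = x⁻¹` shows that `V x` and `x² Vpure` differ by
at most `O(x)` times `E[H² | 𝒢]`, in both directions. Since `V x / x² → V2`, dividing by `x²`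
and letting `x → ∞` along the integers (so that the a.e. statements can be combined) gives
`V2 = Vpure`.
-/

open MeasureTheory Filter Topology

theorem add_sq_le_one_add_mul_sq_add_one_add_inv_mul_sq {ε : ℝ} (hε : 0 < ε) (a b : ℝ) :
    (a + b) ^ 2 ≤ (1 + ε) * a ^ 2 + (1 + ε⁻¹) * b ^ 2 := by
  have key : 0 ≤ ε * ((1 + ε) * a ^ 2 + (1 + ε⁻¹) * b ^ 2 - (a + b) ^ 2) := by
    have : ε * ((1 + ε) * a ^ 2 + (1 + ε⁻¹) * b ^ 2 - (a + b) ^ 2) = (ε * a - b) ^ 2 := by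
      field_simp
      ring
    rw [this]
    positivity
  nlinarith [(mul_nonneg_iff_of_pos_left hε).1 key]

section ConditionalBounds

variable {Ω : Type*} {m₀ : MeasurableSpace Ω} {μ : Measure Ω} {m : MeasurableSpace Ω}

theorem condExp_const_mul_le_of_le {f g₁ g₂ : Ω → ℝ} (hf : Integrable f μ)
    (hg₁ : Integrable g₁ μ) (hg₂ : Integrable g₂ μ) {c a b : ℝ}
    (hle : ∀ ω, c * f ω ≤ a * g₁ ω + b * g₂ ω) :
    (fun ω => c * μ[f|m] ω) ≤ᵐ[μ] fun ω => a * μ[g₁|m] ω + b * μ[g₂|m] ω := by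
  have hmono : μ[c • f|m] ≤ᵐ[μ] μ[a • g₁ + b • g₂|m] :=
    condExp_mono (hf.smul c) ((hg₁.smul a).add (hg₂.smul b)) (Eventually.of_forall hle)
  filter_upwards [hmono, condExp_smul c f m, condExp_add (hg₁.smul a) (hg₂.smul b) m,
    condExp_smul a g₁ m, condExp_smul b g₂ m] with ω hω hf' hadd hg₁' hg₂'
  simp_all [smul_eq_mul]

variable [IsFiniteMeasure μ] {H Z : Ω → ℝ}

theorem condExp_sq_sub_sub_mul_le (hH : MemLp H 2 μ) (hZ : MemLp Z 2 μ) {x : ℝ} (hx : 0 < x) :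
    μ[fun ω => (H ω - x - x * Z ω) ^ 2|m] ≤ᵐ[μ]
      fun ω => (x ^ 2 + x) * μ[fun ω => (1 + Z ω) ^ 2|m] ω
        + (1 + x) * μ[fun ω => H ω ^ 2|m] ω := by
  have hF : MemLp (fun ω => 1 + Z ω) 2 μ := (memLp_const (1 : ℝ)).add hZ
  have hf : MemLp (fun ω => H ω - x - x * Z ω) 2 μ :=
    (hH.sub (memLp_const x)).sub (hZ.const_mul x)
  refine (condExp_const_mul_le_of_le (c := 1) hf.integrable_sq hF.integrable_sq
    hH.integrable_sq fun ω => ?_).mono fun ω h => by simpa using h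
  have := add_sq_le_one_add_mul_sq_add_one_add_inv_mul_sq (inv_pos.2 hx) (-(x * (1 + Z ω))) (H ω)
  rw [inv_inv] at this
  field_simp at this ⊢
  linarith

theorem sq_mul_condExp_sq_one_add_inv_mul_le (hH : MemLp H 2 μ) (hZ : MemLp Z 2 μ) {x : ℝ}
    (hx : 0 < x) :
    (fun ω => x ^ 2 * μ[fun ω => (1 + x⁻¹ * Z ω) ^ 2|m] ω) ≤ᵐ[μ]
      fun ω => (1 + x⁻¹) * μ[fun ω => (H ω - x - Z ω) ^ 2|m] ω
        + (1 + x) * μ[fun ω => H ω ^ 2|m] ω := by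
  have hF : MemLp (fun ω => 1 + x⁻¹ * Z ω) 2 μ := (memLp_const (1 : ℝ)).add (hZ.const_mul x⁻¹)
  have hf : MemLp (fun ω => H ω - x - Z ω) 2 μ := (hH.sub (memLp_const x)).sub hZ
  refine condExp_const_mul_le_of_le hF.integrable_sq hf.integrable_sq hH.integrable_sq
    fun ω => ?_
  have := add_sq_le_one_add_mul_sq_add_one_add_inv_mul_sq (inv_pos.2 hx) (-(H ω - x - Z ω)) (H ω)
  rw [inv_inv] at this
  field_simp at this ⊢
  linarith

end ConditionalBounds

theorem eq_of_quadratic_sandwich {x : ℕ → ℝ} (hx : Tendsto x atTop atTop) {a b c p k : ℝ}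
    (hup : ∀ n, a - 2 * b * x n + c * x n ^ 2 ≤ (x n ^ 2 + x n) * p + (1 + x n) * k)
    (hlo : ∀ n, x n ^ 2 * p ≤ (1 + (x n)⁻¹) * (a - 2 * b * x n + c * x n ^ 2) + (1 + x n) * k) :
    c = p := by
  have hlim {f : ℝ → ℝ} (hf : Continuous f) : Tendsto (fun n => f (x n)⁻¹) atTop (𝓝 (f 0)) :=
    (hf.tendsto 0).comp (tendsto_inv_atTop_zero.comp hx)
  have hpos : ∀ᶠ n in atTop, 0 < x n := hx.eventually_gt_atTop 0
  apply le_antisymm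
  · have hle : ∀ᶠ n in atTop, a * (x n)⁻¹ ^ 2 - 2 * b * (x n)⁻¹ + c
        ≤ p + p * (x n)⁻¹ + k * (x n)⁻¹ ^ 2 + k * (x n)⁻¹ := by
      filter_upwards [hpos] with n hn
      have := hup n
      field_simp
      linarith
    simpa using le_of_tendsto_of_tendsto
      (hlim (f := fun t => a * t ^ 2 - 2 * b * t + c) (by fun_prop))
      (hlim (f := fun t => p + p * t + k * t ^ 2 + k * t) (by fun_prop)) hle
  · have hle : ∀ᶠ n in atTop, p ≤ (1 + (x n)⁻¹) * (a * (x n)⁻¹ ^ 2 - 2 * b * (x n)⁻¹ + c)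
        + k * (x n)⁻¹ ^ 2 + k * (x n)⁻¹ := by
      filter_upwards [hpos] with n hn
      have := hlo n
      field_simp at this ⊢
      linarith
    simpa using le_of_tendsto_of_tendsto tendsto_const_nhds
      (hlim (f := fun t => (1 + t) * (a * t ^ 2 - 2 * b * t + c) + k * t ^ 2 + k * t)
        (by fun_prop)) hle

theorem quadratic_coefficient_eq_pure_investment_value
    {Ω : Type*} {m : MeasurableSpace Ω} (μ : Measure Ω) [IsProbabilityMeasure μ]
    (𝒢 : MeasurableSpace Ω)
    (H : Ω → ℝ) (hH : MemLp H 2 μ)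
    (Θ : Type*) [AddCommGroup Θ] [Module ℝ Θ]
    (G : Θ → Ω → ℝ)
    (hG2 : ∀ ϑ, MemLp (G ϑ) 2 μ)
    (hGsmul : ∀ (c : ℝ) (ϑ : Θ), G (c • ϑ) = fun ω => c * G ϑ ω)
    (V : ℝ → Ω → ℝ) (ϑstar : ℝ → Θ)
    (hVle : ∀ x : ℝ, ∀ ϑ : Θ,
      V x ≤ᵐ[μ] μ[fun ω => (H ω - x - G ϑ ω) ^ 2 | 𝒢])
    (hopt : ∀ x : ℝ,
      V x =ᵐ[μ] μ[fun ω => (H ω - x - G (ϑstar x) ω) ^ 2 | 𝒢])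
    (Vpure : Ω → ℝ) (ϑpure : Θ)
    (hVpureLe : ∀ ϑ : Θ,
      Vpure ≤ᵐ[μ] μ[fun ω => (1 + G ϑ ω) ^ 2 | 𝒢])
    (hVpureOpt : Vpure =ᵐ[μ] μ[fun ω => (1 + G ϑpure ω) ^ 2 | 𝒢])
    (V0 V1 V2 : Ω → ℝ)
    (hquad : ∀ x : ℝ, V x =ᵐ[μ] fun ω => V0 ω - 2 * V1 ω * x + V2 ω * x ^ 2) :
    V2 =ᵐ[μ] Vpure := by
  set K := μ[fun ω => H ω ^ 2|𝒢]
  have hupper (x : ℝ) (hx : 0 < x) :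
      V x ≤ᵐ[μ] fun ω => (x ^ 2 + x) * Vpure ω + (1 + x) * K ω := by
    filter_upwards [hVle x (x • ϑpure), condExp_sq_sub_sub_mul_le hH (hG2 ϑpure) hx (m := 𝒢),
      hVpureOpt] with ω hV hbound hpure
    rw [hGsmul] at hV
    rw [hpure]
    exact hV.trans hbound
  have hlower (x : ℝ) (hx : 0 < x) :
      (fun ω => x ^ 2 * Vpure ω) ≤ᵐ[μ] fun ω => (1 + x⁻¹) * V x ω + (1 + x) * K ω := by
    filter_upwards [hVpureLe (x⁻¹ • ϑstar x), sq_mul_condExp_sq_one_add_inv_mul_le hH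
      (hG2 (ϑstar x)) hx (m := 𝒢), hopt x] with ω hpure hbound hV
    rw [hGsmul] at hpure
    rw [hV]
    exact (mul_le_mul_of_nonneg_left hpure (sq_nonneg x)).trans hbound
  have hx : ∀ n : ℕ, (0 : ℝ) < (n + 1 : ℕ) := fun n => Nat.cast_pos.2 n.succ_pos
  filter_upwards [ae_all_iff.2 fun n : ℕ => hquad (n + 1 : ℕ),
    ae_all_iff.2 fun n => hupper _ (hx n), ae_all_iff.2 fun n => hlower _ (hx n)]
    with ω hquadω hupω hloω
  refine eq_of_quadratic_sandwich (x := fun n : ℕ => ((n + 1 : ℕ) : ℝ)) (a := V0 ω) (b := V1 ω)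
    (k := K ω) (tendsto_natCast_atTop_atTop.comp (tendsto_add_atTop_nat 1)) (fun n => ?_)
    (fun n => ?_) <;> rw [← hquadω n]
  exacts [hupω n, hloω n]
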